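/- arXiv:1604.03825 — 3 statements merged into one kernel-verified Lean document; each statement's English description precedes it below -/
import Mathlib

section
/- Let 0 < δ̃ < δ and let φ : ℝ → ℝ be a C¹ function with φ(α)² ≥ δ² δ̃² / (δ² − δ̃²) for all α (in particular φ(α) > δ̃). Define γ(α) := φ(α)(cos α, sin α) ∈ ℝ² and assume that for every α the distance from the origin to the normal line to γ at γ(α) is at most δ̃. Then for all α, β with |α − β| ≤ π one has |φ(α) − φ(β)| ≤ πδ. -/
open Real

/-! With `u α = (cos α, sin α)` we have `γ = φ • u` and `γ' = φ' • u + φ • u (· + π/2)`, so the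
distance from the origin to the normal line at `γ α` is `|⟪γ, γ'⟫| / ‖γ'‖ = |φ φ'| / √(φ² + φ'²)`.
Bounding it by `δ̃`, the lower bound on `φ²` forces `|φ'| ≤ δ`; the mean value inequality
concludes. -/

noncomputable def polarUnit (α : ℝ) : EuclideanSpace ℝ (Fin 2) :=
  EuclideanSpace.single 0 (cos α) + EuclideanSpace.single 1 (sin α)

lemma polarUnit_eq (α : ℝ) : polarUnit α =
    cos α • EuclideanSpace.single (0 : Fin 2) (1 : ℝ) + sin α • EuclideanSpace.single 1 1 := by
  ext j; fin_cases j <;> simp [polarUnit]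

lemma inner_polarUnit (α β : ℝ) : inner ℝ (polarUnit α) (polarUnit β) = cos (α - β) := by
  simp [polarUnit, inner_add_left, inner_add_right, EuclideanSpace.inner_single_left, cos_sub]

lemma hasDerivAt_polarUnit (α : ℝ) : HasDerivAt polarUnit (polarUnit (α + π / 2)) α := by
  rw [polarUnit_eq (α + π / 2), funext polarUnit_eq, cos_add_pi_div_two, sin_add_pi_div_two]
  exact ((hasDerivAt_cos α).smul_const _).add ((hasDerivAt_sin α).smul_const _)

lemma hasDerivAt_smul_polarUnit {φ : ℝ → ℝ} {φ' α : ℝ} (hφ : HasDerivAt φ φ' α) :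
    HasDerivAt (fun x => φ x • polarUnit x)
      (φ' • polarUnit α + φ α • polarUnit (α + π / 2)) α :=
  (hφ.smul (hasDerivAt_polarUnit α)).congr_deriv (add_comm _ _)

lemma inner_smul_polarUnit_tangent (a b α : ℝ) :
    inner ℝ (a • polarUnit α) (b • polarUnit α + a • polarUnit (α + π / 2)) = a * b := by
  simp only [inner_add_right, real_inner_smul_left, real_inner_smul_right, inner_polarUnit,
    sub_self, cos_zero, sub_add_cancel_left, cos_neg, cos_pi_div_two]
  ring

lemma norm_sq_polarUnit_tangent (a b α : ℝ) :
    ‖b • polarUnit α + a • polarUnit (α + π / 2)‖ ^ 2 = a ^ 2 + b ^ 2 := by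
  rw [← real_inner_self_eq_norm_sq]
  simp only [inner_add_left, inner_add_right, real_inner_smul_left, real_inner_smul_right,
    inner_polarUnit, sub_self, cos_zero, sub_add_cancel_left, add_sub_cancel_left, cos_neg,
    cos_pi_div_two]
  ring

lemma sq_inner_le_of_inner_sub_eq_zero {E : Type*} [NormedAddCommGroup E] [InnerProductSpace ℝ E]
    {p x v : E} {r : ℝ} (hp : ‖p‖ ≤ r) (hpx : inner ℝ (p - x) v = 0) :
    inner ℝ x v ^ 2 ≤ r ^ 2 * ‖v‖ ^ 2 := by
  rw [inner_sub_left, sub_eq_zero] at hpx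
  calc inner ℝ x v ^ 2 = |inner ℝ p v| ^ 2 := by rw [sq_abs, hpx]
    _ ≤ (‖p‖ * ‖v‖) ^ 2 := by gcongr; exact abs_real_inner_le_norm p v
    _ ≤ r ^ 2 * ‖v‖ ^ 2 := by rw [mul_pow]; gcongr

lemma abs_le_of_sq_mul_le_sq_mul_add_sq {δt δ a b : ℝ} (hδt : 0 < δt) (hδ : δt < δ)
    (ha : δ ^ 2 * δt ^ 2 / (δ ^ 2 - δt ^ 2) ≤ a ^ 2)
    (hab : (a * b) ^ 2 ≤ δt ^ 2 * (a ^ 2 + b ^ 2)) : |b| ≤ δ := by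
  have hgap : 0 < δ ^ 2 - δt ^ 2 := by nlinarith
  rw [div_le_iff₀ hgap] at ha
  have ha_gt : δt ^ 2 < a ^ 2 := by nlinarith [pow_pos hδt 4]
  -- `b² (a² - δ̃²) ≤ δ̃² a² ≤ δ² (a² - δ̃²)`
  have hb : b ^ 2 ≤ δ ^ 2 := le_of_mul_le_mul_right (by nlinarith) (sub_pos.2 ha_gt)
  exact abs_le_of_sq_le_sq hb (hδt.trans hδ).le

theorem abs_sub_le_pi_mul_of_normal_lines_close_to_origin_general
    (δt δ : ℝ) (hδt : 0 < δt) (hδ : δt < δ) (φ : ℝ → ℝ) (hφ : ContDiff ℝ 1 φ)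
    (hφδ : ∀ α, δ ^ 2 * δt ^ 2 / (δ ^ 2 - δt ^ 2) ≤ (φ α) ^ 2)
    (γ : ℝ → EuclideanSpace ℝ (Fin 2))
    (hγ : ∀ α, γ α = φ α • (EuclideanSpace.single (0 : Fin 2) (Real.cos α) +
      EuclideanSpace.single (1 : Fin 2) (Real.sin α)))
    (hnormal : ∀ α, ∃ p : EuclideanSpace ℝ (Fin 2),
      ‖p‖ ≤ δt ∧ (inner ℝ (p - γ α) (deriv γ α) : ℝ) = 0) :
    ∀ α β : ℝ, |α - β| ≤ Real.pi → |φ α - φ β| ≤ Real.pi * δ := by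
  have hφd : Differentiable ℝ φ := hφ.differentiable one_ne_zero
  have hγ_eq : γ = fun x => φ x • polarUnit x := funext hγ
  have hderiv : ∀ x, ‖deriv φ x‖ ≤ δ := fun x => by
    obtain ⟨p, hp, hpγ⟩ := hnormal x
    rw [hγ_eq, (hasDerivAt_smul_polarUnit (hφd x).hasDerivAt).deriv] at hpγ
    have h := sq_inner_le_of_inner_sub_eq_zero hp hpγ
    rw [inner_smul_polarUnit_tangent, norm_sq_polarUnit_tangent] at h
    exact abs_le_of_sq_mul_le_sq_mul_add_sq hδt hδ (hφδ x) h
  intro α β hαβ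
  calc |φ α - φ β| ≤ δ * |α - β| :=
        convex_univ.norm_image_sub_le_of_norm_deriv_le (fun x _ => hφd x) (fun x _ => hderiv x)
          (Set.mem_univ β) (Set.mem_univ α)
    _ ≤ π * δ := by rw [mul_comm]; gcongr; linarith

/-- If `0 < δ̃ < δ`, `φ` is a positive `C¹` function with
`φ(α)² ≥ δ²δ̃²/(δ² − δ̃²)`, and the normal lines to the curve
`γ(α) = φ(α)(cos α, sin α)` pass at distance at most `δ̃` from the origin, then
`|φ(α) − φ(β)| ≤ πδ` whenever `|α − β| ≤ π`.  A point `p` lies on the normal line to `γ`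
at `γ(α)` precisely when `p − γ(α)` is orthogonal to `γ'(α)`. -/
theorem abs_sub_le_pi_mul_of_normal_lines_close_to_origin
    (δt δ : ℝ) (hδt : 0 < δt) (hδ : δt < δ) (φ : ℝ → ℝ) (hφ : ContDiff ℝ 1 φ)
    (hφpos : ∀ α, 0 < φ α)
    (hφδ : ∀ α, δ ^ 2 * δt ^ 2 / (δ ^ 2 - δt ^ 2) ≤ (φ α) ^ 2)
    (γ : ℝ → EuclideanSpace ℝ (Fin 2))
    (hγ : ∀ α, γ α = φ α • (EuclideanSpace.single (0 : Fin 2) (Real.cos α) +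
      EuclideanSpace.single (1 : Fin 2) (Real.sin α)))
    (hnormal : ∀ α, ∃ p : EuclideanSpace ℝ (Fin 2),
      ‖p‖ ≤ δt ∧ (inner ℝ (p - γ α) (deriv γ α) : ℝ) = 0) :
    ∀ α β : ℝ, |α - β| ≤ Real.pi → |φ α - φ β| ≤ Real.pi * δ :=
  abs_sub_le_pi_mul_of_normal_lines_close_to_origin_general δt δ hδt hδ φ hφ hφδ γ hγ hnormal
end

section
/- Assume f satisfies hypothesis (f≥g) with constants Z > θ₀ > 0. Let u be a classical solution of ∂_t u = Δu + f(t,u) on (0,∞)×ℝ^N with nonnegative, continuous, compactly supported, not identically zero initial datum, satisfying the invasion property with the same level Z. Then for all θ', θ with θ₀ < θ' < θ < Z, the centered inscribed radii satisfy liminf_{t→∞} ( r_{θ'}(t) − r_θ(t) ) < +∞. -/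
open Filter Metric Set
open scoped ENNReal NNReal

/-- The Laplacian of a function on Euclidean space, as the sum of second partial
derivatives in the coordinate directions. -/
noncomputable def laplacian {N : ℕ} (φ : EuclideanSpace ℝ (Fin N) → ℝ)
    (x : EuclideanSpace ℝ (Fin N)) : ℝ :=
  ∑ i : Fin N, fderiv ℝ (fun y => fderiv ℝ φ y (EuclideanSpace.single i (1:ℝ))) x
    (EuclideanSpace.single i (1:ℝ))

/-- Standing assumptions: `f (t, z)` is Hölder continuous in `t`, Lipschitz continuous
in `z` uniformly in `t`, and `f (t, 0) = 0` for all `t > 0`. -/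
def StandingAssumptions (f : ℝ → ℝ → ℝ) : Prop :=
  (∃ a : ℝ, 0 < a ∧ a ≤ 1 ∧ ∃ C : ℝ, ∀ z : ℝ, ∀ t ∈ Set.Ioi (0:ℝ), ∀ s ∈ Set.Ioi (0:ℝ),
    |f t z - f s z| ≤ C * |t - s| ^ a) ∧
  (∃ L : ℝ≥0, ∀ t > (0:ℝ), LipschitzWith L (fun z => f t z)) ∧
  (∀ t > (0:ℝ), f t 0 = 0)

/-- A classical solution of `∂ₜ u = Δu + f(t,u)` on `(0,∞) × ℝᴺ` with initial datum `u₀`: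
continuous on `[0,∞) × ℝᴺ`, bounded on `[0,T] × ℝᴺ` for every `T > 0`, `C¹` in `t` and
`C²` in `x` for `t > 0`, satisfying the equation pointwise for `t > 0`, and `u(0,·) = u₀`. -/
structure IsClassicalSolution {N : ℕ} (f : ℝ → ℝ → ℝ)
    (u : ℝ → EuclideanSpace ℝ (Fin N) → ℝ)
    (u₀ : EuclideanSpace ℝ (Fin N) → ℝ) : Prop where
  cont : ContinuousOn (Function.uncurry u)
    (Set.Ici (0:ℝ) ×ˢ (Set.univ : Set (EuclideanSpace ℝ (Fin N))))
  bounded : ∀ T > (0:ℝ), ∃ C : ℝ, ∀ t ∈ Set.Icc (0:ℝ) T, ∀ x, |u t x| ≤ C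
  time_diff : ∀ x, ∀ t > (0:ℝ), DifferentiableAt ℝ (fun s => u s x) t
  space_smooth : ∀ t > (0:ℝ), ContDiff ℝ 2 (u t)
  eqn : ∀ t > (0:ℝ), ∀ x, deriv (fun s => u s x) t = laplacian (u t) x + f t (u t x)
  init : u 0 = u₀

/-- Invasion property with level `Z ∈ (0, +∞]`: for every compact `K`,
`liminf_{t→∞} min_{x ∈ K} u (t, x) ≥ Z`, i.e. for every real `z` (strictly) below `Z`,
eventually `u (t, ·) ≥ z` on `K`. -/
def Invades {N : ℕ} (u : ℝ → EuclideanSpace ℝ (Fin N) → ℝ) (Z : ℝ≥0∞) : Prop :=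
  ∀ z : ℝ, ENNReal.ofReal z < Z →
    ∀ K : Set (EuclideanSpace ℝ (Fin N)), IsCompact K →
      ∃ t₀ : ℝ, ∀ t ≥ t₀, ∀ x ∈ K, z ≤ u t x

/-- The upper level set `U_θ(t) = {x : u (t, x) > θ}`. -/
def upperLevelSet {N : ℕ} (u : ℝ → EuclideanSpace ℝ (Fin N) → ℝ) (θ t : ℝ) :
    Set (EuclideanSpace ℝ (Fin N)) := {x | θ < u t x}

/-- The inner radius `ℛⁱ_θ(t)`: the supremum of radii of balls contained in the upper
level set `U_θ(t)`. -/
noncomputable def innerRadius {N : ℕ} (u : ℝ → EuclideanSpace ℝ (Fin N) → ℝ)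
    (θ t : ℝ) : ℝ :=
  sSup {r : ℝ | ∃ x₀, ∀ x ∈ Metric.ball x₀ r, θ < u t x}

/-- The outer radius `ℛᵉ_θ(t)`: the infimum of radii of balls containing the upper
level set `U_θ(t)`. -/
noncomputable def outerRadius {N : ℕ} (u : ℝ → EuclideanSpace ℝ (Fin N) → ℝ)
    (θ t : ℝ) : ℝ :=
  sInf {r : ℝ | 0 < r ∧ ∃ x₀, ∀ x ∉ Metric.ball x₀ r, u t x ≤ θ}

/-- The centered inscribed radius `r_θ(t)`: the supremum of radii `r` such that
`u (t, ·) > θ` on the centered ball `B_r(0)` (equal to `0` if no positive `r` works). -/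
noncomputable def centeredRadius {N : ℕ} (u : ℝ → EuclideanSpace ℝ (Fin N) → ℝ)
    (θ t : ℝ) : ℝ :=
  sSup {r : ℝ | ∀ x : EuclideanSpace ℝ (Fin N), ‖x‖ < r → θ < u t x}

/-- Hypothesis (f≥g): `f(t,z) ≥ g(z)` with `g` continuous, `g ≤ 0` on `(0,θ₀)`,
`g > 0` on `(θ₀,Z)` and `∫₀^Z g > 0`. -/
def HypFG (f : ℝ → ℝ → ℝ) (g : ℝ → ℝ) (θ₀ Z : ℝ) : Prop :=
  ContinuousOn g (Set.Ici 0) ∧ (∀ t ≥ (0:ℝ), ∀ z ≥ (0:ℝ), g z ≤ f t z) ∧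
  0 < θ₀ ∧ θ₀ < Z ∧ (∀ z ∈ Set.Ioo 0 θ₀, g z ≤ 0) ∧ (∀ z ∈ Set.Ioo θ₀ Z, 0 < g z) ∧
  0 < ∫ z in (0:ℝ)..Z, g z

/-- Hypothesis (KPP): `inf_{t>0} f(t,z) > 0` for every `z ∈ (0,Z)` and
`z ↦ f(t,z)/z` is nonincreasing on `(0,∞)` for every `t > 0`. -/
def HypKPP (f : ℝ → ℝ → ℝ) (Z : ℝ) : Prop :=
  0 < Z ∧ (∀ z ∈ Set.Ioo 0 Z, ∃ ε > (0:ℝ), ∀ t > (0:ℝ), ε ≤ f t z) ∧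
  (∀ t > (0:ℝ), AntitoneOn (fun z => f t z / z) (Set.Ioi 0))

/-!
Suppose `r_{θ'}(t) - r_θ(t) → +∞`. Comparison with the plane waves `A e^{(L+1)t + ⟨e,x⟩}`
(`L` a Lipschitz constant of `f`) shows that `r_θ` grows at most linearly, so there are arbitrarily
late time windows `[w - τ, w]` over which `r_θ` never drops far below `r_θ(w)`. Pick `x₀` just
outside the `θ`-level set at time `w`: throughout the window, a ball of fixed radius `ρ` around `x₀`
stays inside the `θ'`-level set. Since `f ≥ g ≥ δ > 0` on `[θ', b]` for some `b ∈ (θ, Z)`, the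
paraboloid `θ' + δ/2 (t - s) - ε ‖x - x₀‖²` is a subsolution on that cylinder and lifts `u(w, x₀)`
to `b > θ`, a contradiction.
-/

open scoped Laplacian RealInnerProductSpace Topology

theorem IsMaxOn.hasDerivAt_nonneg_of_mem_Ioc {ξ : ℝ → ℝ} {a b t d : ℝ}
    (h : IsMaxOn ξ (Icc a b) t) (ht : t ∈ Ioc a b) (hd : HasDerivAt ξ d t) : 0 ≤ d := by
  have hcone : a - t ∈ posTangentConeAt (Icc a b) t := by
    refine sub_mem_posTangentConeAt_of_segment_subset ?_
    rw [segment_symm, segment_eq_Icc ht.1.le]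
    exact Icc_subset_Icc_right ht.2
  have := h.localize.hasFDerivWithinAt_nonpos hd.hasFDerivAt.hasFDerivWithinAt hcone
  simp only [ContinuousLinearMap.toSpanSingleton_apply, smul_eq_mul] at this
  nlinarith [ht.1]

theorem IsLocalMax.nonpos_of_hasDerivAt_of_hasDerivAt {q q' : ℝ → ℝ} {a L : ℝ}
    (h : IsLocalMax q a) (hq : ∀ r, HasDerivAt q (q' r) r) (hq' : HasDerivAt q' L a) :
    L ≤ 0 := by
  by_contra! hL
  have hsign : ∀ᶠ r in 𝓝 a, SignType.sign (q' r) = SignType.sign (r - a) :=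
    eventually_nhdsWithin_sign_eq_of_deriv_pos (hq'.deriv ▸ hL)
      (h.hasDerivAt_eq_zero (hq a))
  obtain ⟨δ, hδ, hball⟩ := Metric.eventually_nhds_iff_ball.1 (hsign.and h)
  have hab : a < a + δ / 2 := by linarith
  obtain ⟨c, hc, hslope⟩ := exists_hasDerivAt_eq_slope q q' hab
    (fun r _ => (hq r).continuousAt.continuousWithinAt) (fun r _ => hq r)
  have hc_ball : c ∈ Metric.ball a δ := by
    rw [Metric.mem_ball, Real.dist_eq, abs_lt]; constructor <;> linarith [hc.1, hc.2]
  have hq'c : 0 < q' c := by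
    have := (hball c hc_ball).1
    rwa [sign_pos (sub_pos.2 hc.1), sign_eq_one_iff] at this
  have hend := (hball (a + δ / 2) (by
    rw [Metric.mem_ball, Real.dist_eq, abs_lt]; constructor <;> linarith)).2
  rw [hslope, lt_div_iff₀ (by linarith)] at hq'c
  linarith

section LaplacianCalculus
variable {N : ℕ} {φ ψ : EuclideanSpace ℝ (Fin N) → ℝ} {x : EuclideanSpace ℝ (Fin N)}

theorem laplacian_eq_laplacian (hφ : ContDiffAt ℝ 2 φ x) : laplacian φ x = Δ φ x := by
  have hD : DifferentiableAt ℝ (fderiv ℝ φ) x :=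
    (hφ.fderiv_right (m := 1) le_rfl).differentiableAt one_ne_zero
  rw [InnerProductSpace.laplacian_eq_iteratedFDeriv_orthonormalBasis φ
    (EuclideanSpace.basisFun (Fin N) ℝ)]
  refine Finset.sum_congr rfl fun i _ => ?_
  rw [iteratedFDeriv_two_apply, fderiv_clm_apply hD (differentiableAt_const _)]
  simp

theorem laplacian_sub (hφ : ContDiff ℝ 2 φ) (hψ : ContDiff ℝ 2 ψ) (x) :
    laplacian (fun y => φ y - ψ y) x = laplacian φ x - laplacian ψ x := by
  rw [laplacian_eq_laplacian (hφ.sub hψ).contDiffAt, laplacian_eq_laplacian hφ.contDiffAt,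
    laplacian_eq_laplacian hψ.contDiffAt]
  exact hφ.contDiffAt.laplacian_sub hψ.contDiffAt

theorem laplacian_const_mul (c : ℝ) (hφ : ContDiff ℝ 2 φ) (x) :
    laplacian (fun y => c * φ y) x = c * laplacian φ x := by
  rw [laplacian_eq_laplacian (contDiff_const.mul hφ).contDiffAt,
    laplacian_eq_laplacian hφ.contDiffAt]
  exact InnerProductSpace.laplacian_smul c hφ.contDiffAt

theorem laplacian_add_const_mul_norm_sub_sq (a c : ℝ) (x₀ x : EuclideanSpace ℝ (Fin N)) :
    laplacian (fun y => a + c * ‖y - x₀‖ ^ 2) x = 2 * N * c := by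
  have hfirst : ∀ y v, fderiv ℝ (fun y => a + c * ‖y - x₀‖ ^ 2) y v = 2 * c * ⟪y - x₀, v⟫ := by
    intro y v
    have h : HasFDerivAt (fun y => a + c * ‖y - x₀‖ ^ 2) _ y :=
      (((hasFDerivAt_id y).sub_const x₀).norm_sq.const_mul c).const_add a
    simp only [h.fderiv, id_eq, map_sub, ContinuousLinearMap.comp_id, smul_apply, sub_apply,
      coe_innerSL_apply, nsmul_eq_mul, Nat.cast_ofNat, smul_eq_mul, inner_sub_left]
    ring
  have hsecond : ∀ v, fderiv ℝ (fun y => 2 * c * ⟪y - x₀, v⟫) x v = 2 * c * ‖v‖ ^ 2 := by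
    intro v
    have h : HasFDerivAt (fun y => 2 * c * ⟪y - x₀, v⟫) _ x :=
      (((hasFDerivAt_id x).sub_const x₀).inner ℝ (hasFDerivAt_const v x)).const_mul (2 * c)
    simp [h.fderiv]
  simp only [laplacian, hfirst, hsecond, PiLp.norm_single, norm_one, one_pow, mul_one,
    Finset.sum_const, Finset.card_univ, Fintype.card_fin, nsmul_eq_mul]
  ring

theorem laplacian_exp_inner (e x : EuclideanSpace ℝ (Fin N)) :
    laplacian (fun y => Real.exp ⟪e, y⟫) x = ‖e‖ ^ 2 * Real.exp ⟪e, x⟫ := by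
  have hfirst : ∀ y v, fderiv ℝ (fun y => Real.exp ⟪e, y⟫) y v = Real.exp ⟪e, y⟫ * ⟪e, v⟫ := by
    intro y v
    have h : HasFDerivAt (fun y => Real.exp ⟪e, y⟫) _ y := ((innerSL ℝ e).hasFDerivAt).exp
    simp [h.fderiv]
  have hsecond : ∀ v, fderiv ℝ (fun y => Real.exp ⟪e, y⟫ * ⟪e, v⟫) x v
      = ⟪e, v⟫ ^ 2 * Real.exp ⟪e, x⟫ := by
    intro v
    have h : HasFDerivAt (fun y => Real.exp ⟪e, y⟫ * ⟪e, v⟫) _ x :=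
      ((innerSL ℝ e).hasFDerivAt).exp.mul_const ⟪e, v⟫
    simp only [h.fderiv, coe_innerSL_apply, smul_apply, smul_eq_mul]
    ring
  simp only [laplacian, hfirst, hsecond, ← Finset.sum_mul, EuclideanSpace.real_norm_sq_eq]
  simp [EuclideanSpace.inner_single_right]

theorem laplacian_nonpos_of_isLocalMax (hφ : ContDiff ℝ 2 φ) (h : IsLocalMax φ x) :
    laplacian φ x ≤ 0 := by
  refine Finset.sum_nonpos fun i _ => ?_
  set v := EuclideanSpace.single i (1 : ℝ)
  have hline : ∀ r : ℝ, HasDerivAt (fun r : ℝ => x + r • v) v r := fun r => by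
    simpa using ((hasDerivAt_id r).smul_const v).const_add x
  have hdir : Differentiable ℝ (fun y => fderiv ℝ φ y v) :=
    ((hφ.fderiv_right (m := 1) le_rfl).differentiable one_ne_zero).clm_apply
      (differentiable_const v)
  refine IsLocalMax.nonpos_of_hasDerivAt_of_hasDerivAt (q := fun r => φ (x + r • v))
    (q' := fun r => fderiv ℝ φ (x + r • v) v) (a := 0) ?_ (fun r => ?_) ?_
  · exact IsLocalMax.comp_continuous (g := fun r : ℝ => x + r • v) (by simpa using h)
      (hline 0).continuousAt
  · exact ((hφ.differentiable two_ne_zero) _).hasFDerivAt.comp_hasDerivAt r (hline r)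
  · exact (hdir x).hasFDerivAt.comp_hasDerivAt_of_eq 0 (hline 0) (by simp)

end LaplacianCalculus

section MaximumPrinciple
variable {N : ℕ} {w : ℝ → EuclideanSpace ℝ (Fin N) → ℝ}

theorem le_zero_of_heat_subsolution_on_cylinder {s T ρ : ℝ} {x₀ : EuclideanSpace ℝ (Fin N)}
    (hcont : ContinuousOn (Function.uncurry w) (Icc s T ×ˢ closedBall x₀ ρ))
    (hdiff : ∀ t ∈ Ioc s T, ∀ x ∈ ball x₀ ρ, DifferentiableAt ℝ (fun r => w r x) t)
    (hsmooth : ∀ t ∈ Ioc s T, ContDiff ℝ 2 (w t))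
    (hbase : ∀ x ∈ closedBall x₀ ρ, w s x ≤ 0)
    (hside : ∀ t ∈ Icc s T, ∀ x ∈ sphere x₀ ρ, w t x ≤ 0)
    (hsub : ∀ t ∈ Ioc s T, ∀ x ∈ ball x₀ ρ, 0 < w t x →
      deriv (fun r => w r x) t < laplacian (w t) x) :
    ∀ t ∈ Icc s T, ∀ x ∈ closedBall x₀ ρ, w t x ≤ 0 := by
  by_contra! hpos
  obtain ⟨t₁, ht₁, x₁, hx₁, hw₁⟩ := hpos
  obtain ⟨⟨tm, xm⟩, ⟨htm, hxm⟩, hmax⟩ :=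
    (isCompact_Icc.prod (isCompact_closedBall x₀ ρ)).exists_isMaxOn ⟨(t₁, x₁), ht₁, hx₁⟩ hcont
  have hmax' : ∀ t ∈ Icc s T, ∀ x ∈ closedBall x₀ ρ, w t x ≤ w tm xm :=
    fun t ht x hx => hmax (show (t, x) ∈ Icc s T ×ˢ closedBall x₀ ρ from ⟨ht, hx⟩)
  have hwm : 0 < w tm xm := hw₁.trans_le (hmax' t₁ ht₁ x₁ hx₁)
  have htm' : tm ∈ Ioc s T := by
    refine ⟨htm.1.lt_of_ne ?_, htm.2⟩
    rintro rfl
    linarith [hbase xm hxm]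
  have hxm' : xm ∈ ball x₀ ρ := by
    refine mem_ball.2 ((mem_closedBall.1 hxm).lt_of_ne fun h => ?_)
    linarith [hside tm htm xm (mem_sphere.2 h)]
  have htime : 0 ≤ deriv (fun r => w r xm) tm :=
    IsMaxOn.hasDerivAt_nonneg_of_mem_Ioc (fun r hr => hmax' r hr xm hxm) htm'
      (hdiff tm htm' xm hxm').hasDerivAt
  have hspace : laplacian (w tm) xm ≤ 0 :=
    laplacian_nonpos_of_isLocalMax (hsmooth tm htm') <| Filter.mem_of_superset
      (isOpen_ball.mem_nhds hxm') fun x hx => hmax' tm htm x (ball_subset_closedBall hx)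
  linarith [hsub tm htm' xm hxm' hwm]

theorem le_mul_of_heat_subsolution {T B ε : ℝ} (hε : 0 < ε)
    (hcont : ContinuousOn (Function.uncurry w) (Icc 0 T ×ˢ univ))
    (hdiff : ∀ t ∈ Ioc 0 T, ∀ x, DifferentiableAt ℝ (fun r => w r x) t)
    (hsmooth : ∀ t ∈ Ioc 0 T, ContDiff ℝ 2 (w t))
    (hbdd : ∀ t ∈ Icc 0 T, ∀ x, w t x ≤ B)
    (hinit : ∀ x, w 0 x ≤ 0)
    (hsub : ∀ t ∈ Ioc 0 T, ∀ x, 0 < w t x → deriv (fun r => w r x) t < laplacian (w t) x) :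
    ∀ t ∈ Icc 0 T, ∀ x, w t x ≤ ε * (2 * N * t) + ε * ‖x‖ ^ 2 := by
  intro t ht x
  -- The penalty `ε (2 N t + ‖x‖²)` has `∂ₜ = Δ`, and it beats the bound `B` outside a ball.
  set R := ‖x‖ + √(|B| / ε)
  have hR : |B| ≤ ε * R ^ 2 := by
    have : |B| = ε * √(|B| / ε) ^ 2 := by
      rw [Real.sq_sqrt (by positivity)]; field_simp
    rw [this]
    gcongr
    linarith [norm_nonneg x]
  have hpen_smooth : ∀ r, ContDiff ℝ 2
      (fun y : EuclideanSpace ℝ (Fin N) => ε * (2 * N * r) + ε * ‖y‖ ^ 2) :=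
    fun r => contDiff_const.add (contDiff_const.mul (contDiff_norm_sq ℝ))
  have key := le_zero_of_heat_subsolution_on_cylinder (s := 0) (T := T) (x₀ := 0) (ρ := R)
    (w := fun r y => w r y - (ε * (2 * N * r) + ε * ‖y‖ ^ 2)) ?_ ?_ ?_ ?_ ?_ ?_ t ht x
    (by simp [R]; positivity)
  · simpa using key
  · exact (hcont.mono (prod_mono subset_rfl (subset_univ _))).sub
      (Continuous.continuousOn (by fun_prop))
  · exact fun r hr y _ => (hdiff r hr y).sub (by fun_prop)
  · exact fun r hr => (hsmooth r hr).sub (hpen_smooth r)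
  · intro y _
    simp only [mul_zero, zero_add]
    linarith [hinit y, mul_nonneg hε.le (sq_nonneg ‖y‖)]
  · intro r hr y hy
    rw [mem_sphere_zero_iff_norm] at hy
    have : 0 ≤ ε * (2 * N * r) := by have := hr.1; positivity
    rw [hy]
    linarith [hbdd r hr y, le_abs_self B]
  · intro r hr y _ hpos
    have hw : 0 < w r y := by
      have : 0 ≤ ε * (2 * N * r) + ε * ‖y‖ ^ 2 := by have := hr.1; positivity
      linarith
    have hderiv : HasDerivAt (fun r => w r y - (ε * (2 * N * r) + ε * ‖y‖ ^ 2))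
        (deriv (fun r => w r y) r - ε * (2 * N * 1)) r :=
      (hdiff r hr y).hasDerivAt.sub
        ((((hasDerivAt_id' r).const_mul _).const_mul ε).add_const _)
    have hlap : laplacian (fun y => ε * (2 * N * r) + ε * ‖y‖ ^ 2) y = 2 * N * ε := by
      simpa using laplacian_add_const_mul_norm_sub_sq (ε * (2 * N * r)) ε 0 y
    rw [hderiv.deriv, laplacian_sub (hsmooth r hr) (hpen_smooth r), hlap]
    linarith [hsub r hr y hw]

theorem le_zero_of_heat_subsolution {T B : ℝ}
    (hcont : ContinuousOn (Function.uncurry w) (Icc 0 T ×ˢ univ))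
    (hdiff : ∀ t ∈ Ioc 0 T, ∀ x, DifferentiableAt ℝ (fun r => w r x) t)
    (hsmooth : ∀ t ∈ Ioc 0 T, ContDiff ℝ 2 (w t))
    (hbdd : ∀ t ∈ Icc 0 T, ∀ x, w t x ≤ B)
    (hinit : ∀ x, w 0 x ≤ 0)
    (hsub : ∀ t ∈ Ioc 0 T, ∀ x, 0 < w t x → deriv (fun r => w r x) t < laplacian (w t) x) :
    ∀ t ∈ Icc 0 T, ∀ x, w t x ≤ 0 := by
  intro t ht x
  have hlim : Tendsto (fun ε : ℝ => ε * (2 * N * t) + ε * ‖x‖ ^ 2) (𝓝[>] 0) (𝓝 0) := by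
    simpa using ((tendsto_id.mul_const _).add (tendsto_id.mul_const _)).mono_left
      (nhdsWithin_le_nhds (a := (0 : ℝ)))
  exact ge_of_tendsto hlim <| eventually_nhdsWithin_of_forall fun ε hε =>
    le_mul_of_heat_subsolution hε hcont hdiff hsmooth hbdd hinit hsub t ht x

end MaximumPrinciple

theorem StandingAssumptions.exists_le_mul {f : ℝ → ℝ → ℝ} (hf : StandingAssumptions f) :
    ∃ L : ℝ≥0, ∀ t > 0, ∀ z > 0, f t z ≤ L * z := by
  obtain ⟨-, ⟨L, hL⟩, h0⟩ := hf
  refine ⟨L, fun t ht z hz => (le_abs_self _).trans ?_⟩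
  simpa [Real.dist_eq, h0 t ht, abs_of_pos hz] using (hL t ht).dist_le_mul z 0

theorem HasCompactSupport.exists_le_mul_exp_neg_norm {E : Type*} [NormedAddCommGroup E]
    {φ : E → ℝ} (hφ : HasCompactSupport φ) (hc : Continuous φ) :
    ∃ A > 0, ∀ x, φ x ≤ A * Real.exp (-‖x‖) := by
  obtain ⟨C, hC⟩ := (hφ.mul_right (f' := fun x => Real.exp ‖x‖)).exists_bound_of_continuous
    (hc.mul (by fun_prop))
  refine ⟨max C 1, by positivity, fun x => ?_⟩
  have hx : φ x = φ x * Real.exp ‖x‖ * Real.exp (-‖x‖) := by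
    rw [mul_assoc, ← Real.exp_add]; simp
  rw [hx]
  gcongr
  exact (le_abs_self _).trans ((hC x).trans (le_max_left _ _))

theorem exists_norm_eq_one_inner_eq_neg_norm {E : Type*} [NormedAddCommGroup E]
    [InnerProductSpace ℝ E] [Nontrivial E] (x : E) : ∃ e : E, ‖e‖ = 1 ∧ ⟪e, x⟫ = -‖x‖ := by
  rcases eq_or_ne x 0 with rfl | hx
  · obtain ⟨e, he⟩ := exists_norm_eq E zero_le_one
    exact ⟨e, he, by simp⟩
  · refine ⟨-(‖x‖⁻¹ • x), by simp [norm_smul, hx], ?_⟩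
    rw [inner_neg_left, real_inner_smul_left, real_inner_self_eq_norm_sq]
    field_simp

theorem exists_window_without_drop {F : ℝ → ℝ} {T₁ τ c₁ c₀ : ℝ} (hτ : 0 ≤ τ)
    (hpos : ∀ t ≥ T₁, 0 ≤ F t) (hlin : ∀ t ≥ T₁, F t ≤ c₁ * t + c₀) :
    ∃ w ≥ T₁ + τ, ∀ t ∈ Icc (w - τ) w, F w - (c₁ * τ + 1) ≤ F t := by
  by_contra! hdrop
  -- Each window of length `τ` would contain a drop of more than `c₁ τ + 1`, so `F` would
  -- grow by that much per window, faster than its linear bound allows.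
  have hgrowth : ∀ k : ℕ, ∀ w ≥ T₁ + k * τ, k * (c₁ * τ + 1) ≤ F w := by
    intro k
    induction k with
    | zero => simpa using hpos
    | succ k ih =>
      intro w hw
      push_cast at hw ⊢
      obtain ⟨t, ht, hdropt⟩ := hdrop w (by nlinarith [(k.cast_nonneg : (0 : ℝ) ≤ k)])
      linarith [ih t (by linarith [ht.1])]
  obtain ⟨k, hk⟩ := exists_nat_gt (c₁ * T₁ + c₀)
  linarith [hgrowth k _ le_rfl, hlin (T₁ + k * τ) (by nlinarith [(k.cast_nonneg : (0 : ℝ) ≤ k)])]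

section CenteredRadius
variable {N : ℕ} {u : ℝ → EuclideanSpace ℝ (Fin N) → ℝ} {θ t : ℝ}

def centeredRadii (u : ℝ → EuclideanSpace ℝ (Fin N) → ℝ) (θ t : ℝ) : Set ℝ :=
  {r | ∀ x : EuclideanSpace ℝ (Fin N), ‖x‖ < r → θ < u t x}

theorem zero_mem_centeredRadii : 0 ∈ centeredRadii u θ t :=
  fun x hx => absurd hx (norm_nonneg x).not_gt

theorem lt_of_norm_lt_centeredRadius {x : EuclideanSpace ℝ (Fin N)}
    (hx : ‖x‖ < centeredRadius u θ t) : θ < u t x := by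
  obtain ⟨r, hr, hxr⟩ := exists_lt_of_lt_csSup ⟨0, zero_mem_centeredRadii⟩ hx
  exact hr x hxr

theorem exists_le_of_centeredRadius_lt (hbdd : BddAbove (centeredRadii u θ t)) {r : ℝ}
    (hr : centeredRadius u θ t < r) : ∃ x, ‖x‖ < r ∧ u t x ≤ θ := by
  by_contra! h
  exact hr.not_ge (le_csSup hbdd h)

theorem centeredRadius_nonneg (hbdd : BddAbove (centeredRadii u θ t)) :
    0 ≤ centeredRadius u θ t :=
  le_csSup hbdd zero_mem_centeredRadii

theorem centeredRadius_le {M : ℝ} (hM : ∀ r ∈ centeredRadii u θ t, r ≤ M) :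
    centeredRadius u θ t ≤ M :=
  csSup_le ⟨0, zero_mem_centeredRadii⟩ hM

theorem le_of_mem_centeredRadii_of_le_mul_exp (hN : 0 < N) {A c r : ℝ} (hA : 0 < A) (hθ : 0 < θ)
    (hc : 0 ≤ c) (hu : ∀ x, u t x ≤ A * Real.exp (c - ‖x‖)) (hr : r ∈ centeredRadii u θ t) :
    r ≤ c + |Real.log (A / θ)| := by
  have : Nonempty (Fin N) := ⟨⟨0, hN⟩⟩
  by_contra! hlt
  obtain ⟨x, hx⟩ := exists_norm_eq (EuclideanSpace ℝ (Fin N))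
    (add_nonneg hc (abs_nonneg (Real.log (A / θ))))
  have hux := (hr x (hx ▸ hlt)).trans_le (hu x)
  have : A * Real.exp (c - ‖x‖) ≤ θ := by
    calc A * Real.exp (c - ‖x‖) ≤ A * Real.exp (-Real.log (A / θ)) := by
          gcongr; linarith [le_abs_self (Real.log (A / θ))]
      _ = θ := by rw [Real.exp_neg, Real.exp_log (by positivity)]; field_simp
  linarith

end CenteredRadius

section Solutions
variable {N : ℕ} {f : ℝ → ℝ → ℝ} {u : ℝ → EuclideanSpace ℝ (Fin N) → ℝ}
  {u₀ : EuclideanSpace ℝ (Fin N) → ℝ}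

theorem IsClassicalSolution.deriv_lt_laplacian_exp_mul_sub_exp_inner
    (hu : IsClassicalSolution f u u₀) {L : ℝ≥0} (hfL : ∀ t > 0, ∀ z > 0, f t z ≤ L * z)
    {A : ℝ} (hA : 0 ≤ A) {e : EuclideanSpace ℝ (Fin N)} (he : ‖e‖ = 1) {r : ℝ} (hr : 0 < r)
    {y : EuclideanSpace ℝ (Fin N)}
    (hpos : 0 < Real.exp (-(L + 1) * r) * u r y - A * Real.exp ⟪e, y⟫) :
    deriv (fun r => Real.exp (-(L + 1) * r) * u r y - A * Real.exp ⟪e, y⟫) r <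
      laplacian (fun y => Real.exp (-(L + 1) * r) * u r y - A * Real.exp ⟪e, y⟫) y := by
  -- With `w` the difference, `∂ₜw - Δw ≤ -w`, because `f(u) ≤ L u` and `Δ e^{⟨e,·⟩} = e^{⟨e,·⟩}`.
  set c : ℝ := L + 1
  have hexp := Real.exp_pos (-c * r)
  have hu_pos : 0 < u r y := by
    have : 0 ≤ A * Real.exp ⟪e, y⟫ := by positivity
    exact pos_of_mul_pos_right (by linarith) hexp.le
  have hsmooth_exp : ContDiff ℝ 2 (fun y : EuclideanSpace ℝ (Fin N) => Real.exp ⟪e, y⟫) :=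
    (contDiff_const.inner ℝ contDiff_id).exp
  have hderiv : HasDerivAt (fun r => Real.exp (-c * r) * u r y - A * Real.exp ⟪e, y⟫)
      (Real.exp (-c * r) * (-c * 1) * u r y + Real.exp (-c * r) * deriv (fun s => u s y) r) r :=
    ((((hasDerivAt_id' r).const_mul (-c)).exp).mul (hu.time_diff y r hr).hasDerivAt).sub_const _
  have hlap : laplacian (fun y => Real.exp (-c * r) * u r y - A * Real.exp ⟪e, y⟫) y
      = Real.exp (-c * r) * laplacian (u r) y - A * Real.exp ⟪e, y⟫ := by
    rw [laplacian_sub (contDiff_const.mul (hu.space_smooth r hr))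
        (contDiff_const.mul hsmooth_exp), laplacian_const_mul _ (hu.space_smooth r hr),
      laplacian_const_mul _ hsmooth_exp, laplacian_exp_inner, he]
    ring
  rw [hderiv.deriv, hlap, hu.eqn r hr y]
  have := mul_le_mul_of_nonneg_left (hfL r hr (u r y) hu_pos) hexp.le
  nlinarith

theorem IsClassicalSolution.le_mul_exp_add_inner (hu : IsClassicalSolution f u u₀) {L : ℝ≥0}
    (hfL : ∀ t > 0, ∀ z > 0, f t z ≤ L * z) {A : ℝ} (hA : 0 ≤ A)
    {e : EuclideanSpace ℝ (Fin N)} (he : ‖e‖ = 1) (h₀ : ∀ x, u₀ x ≤ A * Real.exp ⟪e, x⟫)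
    {t : ℝ} (ht : 0 ≤ t) (x : EuclideanSpace ℝ (Fin N)) :
    u t x ≤ A * Real.exp ((L + 1) * t + ⟪e, x⟫) := by
  rcases ht.eq_or_lt with rfl | ht
  · simpa [hu.init] using h₀ x
  obtain ⟨C, hC⟩ := hu.bounded t ht
  set c : ℝ := L + 1
  have key := le_zero_of_heat_subsolution (T := t) (B := C)
    (w := fun r y => Real.exp (-c * r) * u r y - A * Real.exp ⟪e, y⟫) ?_ ?_ ?_ ?_ ?_
    (fun r hr y hpos => hu.deriv_lt_laplacian_exp_mul_sub_exp_inner hfL hA he hr.1 hpos)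
    t ⟨ht.le, le_rfl⟩ x
  · have hdecomp : A * Real.exp (c * t + ⟪e, x⟫)
        = Real.exp (c * t) * (A * Real.exp ⟪e, x⟫) := by rw [Real.exp_add]; ring
    have hu_eq : u t x = Real.exp (c * t) * (Real.exp (-c * t) * u t x) := by
      rw [← mul_assoc, ← Real.exp_add]; simp
    rw [hdecomp, hu_eq]
    exact mul_le_mul_of_nonneg_left (by linarith) (Real.exp_pos _).le
  · exact ((Real.continuous_exp.comp (by fun_prop)).continuousOn.mul
      (hu.cont.mono (prod_mono Icc_subset_Ici_self subset_rfl))).sub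
      (Continuous.continuousOn (by fun_prop))
  · exact fun r hr y => ((by fun_prop : Differentiable ℝ fun r => Real.exp (-c * r)) r).mul
      (hu.time_diff y r hr.1) |>.sub_const _
  · exact fun r hr => (contDiff_const.mul (hu.space_smooth r hr.1)).sub
      (contDiff_const.mul (contDiff_const.inner ℝ contDiff_id).exp)
  · intro r hr y
    have hdamp : Real.exp (-c * r) ≤ 1 := Real.exp_le_one_iff.2
      (mul_nonpos_of_nonpos_of_nonneg (neg_nonpos.2 (by positivity)) hr.1)
    have : Real.exp (-c * r) * u r y ≤ |u r y| :=
      (mul_le_mul_of_nonneg_left (le_abs_self _) (Real.exp_pos _).le).trans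
        (mul_le_of_le_one_left (abs_nonneg _) hdamp)
    have : 0 ≤ A * Real.exp ⟪e, y⟫ := by positivity
    linarith [hC r hr y]
  · intro y
    simpa [hu.init] using h₀ y

theorem IsClassicalSolution.le_mul_exp_sub_norm (hN : 0 < N) (hu : IsClassicalSolution f u u₀)
    {L : ℝ≥0} (hfL : ∀ t > 0, ∀ z > 0, f t z ≤ L * z) {A : ℝ} (hA : 0 ≤ A)
    (h₀ : ∀ x, u₀ x ≤ A * Real.exp (-‖x‖)) {t : ℝ} (ht : 0 ≤ t) (x : EuclideanSpace ℝ (Fin N)) :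
    u t x ≤ A * Real.exp ((L + 1) * t - ‖x‖) := by
  have : Nonempty (Fin N) := ⟨⟨0, hN⟩⟩
  obtain ⟨e, he, hex⟩ := exists_norm_eq_one_inner_eq_neg_norm x
  have h₀' : ∀ y, u₀ y ≤ A * Real.exp ⟪e, y⟫ := fun y => by
    have : -‖y‖ ≤ ⟪e, y⟫ := by
      simpa [he] using neg_le_of_abs_le (abs_real_inner_le_norm e y)
    exact (h₀ y).trans (by gcongr)
  simpa [hex, sub_eq_add_neg] using hu.le_mul_exp_add_inner hfL hA he h₀' ht x

theorem IsClassicalSolution.exists_centeredRadii_le (hN : 0 < N) (hu : IsClassicalSolution f u u₀)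
    {L : ℝ≥0} (hfL : ∀ t > 0, ∀ z > 0, f t z ≤ L * z) (hu₀cont : Continuous u₀)
    (hu₀supp : HasCompactSupport u₀) {θ : ℝ} (hθ : 0 < θ) :
    ∃ c₀, ∀ t ≥ 0, ∀ r ∈ centeredRadii u θ t, r ≤ (L + 1) * t + c₀ := by
  obtain ⟨A, hA, h₀⟩ := hu₀supp.exists_le_mul_exp_neg_norm hu₀cont
  exact ⟨_, fun t ht r hr => le_of_mem_centeredRadii_of_le_mul_exp hN hA hθ (by positivity)
    (hu.le_mul_exp_sub_norm hN hfL hA.le h₀ ht) hr⟩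

theorem IsClassicalSolution.le_of_gt_on_cylinder (hu : IsClassicalSolution f u u₀)
    {θ' σ ε δ s T ρ : ℝ} {x₀ : EuclideanSpace ℝ (Fin N)} (hs : 0 < s) (hsT : s ≤ T)
    (hρ : 0 ≤ ρ) (hσ : 0 ≤ σ) (hε : 0 ≤ ε) (hσε : σ + 2 * N * ε < δ) (hερ : σ * (T - s) ≤ ε * ρ ^ 2)
    (hf : ∀ t > 0, ∀ z ∈ Ioc θ' (θ' + σ * (T - s)), δ ≤ f t z)
    (hgt : ∀ t ∈ Icc s T, ∀ x ∈ closedBall x₀ ρ, θ' < u t x) :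
    θ' + σ * (T - s) ≤ u T x₀ := by
  have hsmooth_v : ∀ r, ContDiff ℝ 2
      (fun y : EuclideanSpace ℝ (Fin N) => (θ' + σ * (r - s)) + -ε * ‖y - x₀‖ ^ 2) :=
    fun r => contDiff_const.add (contDiff_const.mul ((contDiff_id.sub contDiff_const).norm_sq ℝ))
  have key := le_zero_of_heat_subsolution_on_cylinder (s := s) (T := T) (x₀ := x₀) (ρ := ρ)
    (w := fun r y => ((θ' + σ * (r - s)) + -ε * ‖y - x₀‖ ^ 2) - u r y) ?_ ?_ ?_ ?_ ?_ ?_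
    T ⟨hsT, le_rfl⟩ x₀ (mem_closedBall_self hρ)
  · simpa [sub_nonpos] using key
  · exact (Continuous.continuousOn (by fun_prop)).sub
      (hu.cont.mono (prod_mono (fun r hr => hs.le.trans hr.1) (subset_univ _)))
  · exact fun r hr y _ => ((by fun_prop : Differentiable ℝ fun r : ℝ =>
      (θ' + σ * (r - s)) + -ε * ‖y - x₀‖ ^ 2) r).sub (hu.time_diff y r (hs.trans hr.1))
  · exact fun r hr => (hsmooth_v r).sub (hu.space_smooth r (hs.trans hr.1))
  · intro y hy
    have := hgt s ⟨le_rfl, hsT⟩ y hy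
    nlinarith [mul_nonneg hε (sq_nonneg ‖y - x₀‖)]
  · intro r hr y hy
    rw [mem_sphere, dist_eq_norm] at hy
    have := hgt r hr y (sphere_subset_closedBall (mem_sphere.2 (by rwa [dist_eq_norm])))
    have : σ * (r - s) ≤ σ * (T - s) := by nlinarith [hr.2]
    rw [hy]
    linarith
  · intro r hr y hy hpos
    have hr0 : 0 < r := hs.trans hr.1
    have hgt_r := hgt r ⟨hr.1.le, hr.2⟩ y (ball_subset_closedBall hy)
    have hfδ : δ ≤ f r (u r y) := by
      refine hf r hr0 _ ⟨hgt_r, ?_⟩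
      have : σ * (r - s) ≤ σ * (T - s) := by nlinarith [hr.2]
      nlinarith [mul_nonneg hε (sq_nonneg ‖y - x₀‖)]
    have hderiv : HasDerivAt (fun r => ((θ' + σ * (r - s)) + -ε * ‖y - x₀‖ ^ 2) - u r y)
        (σ * 1 - deriv (fun r => u r y) r) r :=
      (((((hasDerivAt_id' r).sub_const s).const_mul σ).const_add θ').add_const _).sub
        (hu.time_diff y r hr0).hasDerivAt
    rw [hderiv.deriv, laplacian_sub (hsmooth_v r) (hu.space_smooth r hr0),
      laplacian_add_const_mul_norm_sub_sq, hu.eqn r hr0 y]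
    linarith

theorem HypFG.exists_rise_on_cylinder {g : ℝ → ℝ} {θ₀ Z : ℝ} (hfg : HypFG f g θ₀ Z)
    (hu : IsClassicalSolution f u u₀) {θ' b : ℝ} (hθ' : θ₀ < θ') (hθ'b : θ' < b) (hbZ : b < Z) :
    ∃ τ > 0, ∃ ρ : ℝ, ∀ s > 0, ∀ x₀,
      (∀ t ∈ Icc s (s + τ), ∀ x ∈ closedBall x₀ ρ, θ' < u t x) → b ≤ u (s + τ) x₀ := by
  obtain ⟨hgcont, hgf, hθ₀, -, -, hgpos, -⟩ := hfg
  obtain ⟨z₀, hz₀, hmin⟩ := isCompact_Icc.exists_isMinOn (nonempty_Icc.2 hθ'b.le)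
    (hgcont.mono fun z hz => (hθ₀.trans hθ').le.trans hz.1)
  have hδ : 0 < g z₀ := hgpos z₀ ⟨hθ'.trans_le hz₀.1, hz₀.2.trans_lt hbZ⟩
  set δ := g z₀
  -- `σ + 2 N ε < δ` is what makes the paraboloid of `le_of_gt_on_cylinder` a subsolution.
  set σ := δ / 2
  set ε := δ / (4 * (N + 1))
  have hσ : 0 < σ := by positivity
  have hε : 0 < ε := by positivity
  refine ⟨(b - θ') / σ, div_pos (by linarith) hσ, √((b - θ') / ε), fun s hs x₀ hgt => ?_⟩
  have hrise : σ * (s + (b - θ') / σ - s) = b - θ' := by field_simp; ring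
  have := hu.le_of_gt_on_cylinder (δ := δ) hs (by linarith [div_pos (sub_pos.2 hθ'b) hσ])
    (Real.sqrt_nonneg _) hσ.le hε.le ?_ ?_ ?_ hgt
  · linarith
  · have hN : (N : ℝ) / (N + 1) < 1 := (div_lt_one (by positivity)).2 (by linarith)
    have hε' : 2 * N * ε = σ * (N / (N + 1)) := by
      simp only [σ, ε]; field_simp; ring
    linarith [mul_lt_of_lt_one_right hσ hN, show σ = δ / 2 from rfl]
  · rw [hrise, Real.sq_sqrt (div_pos (by linarith) hε).le]
    field_simp; rfl
  · intro t ht z hz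
    rw [hrise] at hz
    have hzθ' : θ' ≤ z := hz.1.le
    exact (hmin ⟨hzθ', by linarith [hz.2]⟩).trans
      (hgf t ht.le z ((hθ₀.trans hθ').le.trans hzθ'))

end Solutions

theorem liminf_centeredRadius_sub_lt_top_general
    {N : ℕ} (hN : 0 < N) (f : ℝ → ℝ → ℝ) (hf : StandingAssumptions f)
    (g : ℝ → ℝ) (θ₀ Z : ℝ) (hfg : HypFG f g θ₀ Z)
    (u₀ : EuclideanSpace ℝ (Fin N) → ℝ)
    (hu₀cont : Continuous u₀)
    (hu₀supp : HasCompactSupport u₀)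
    (u : ℝ → EuclideanSpace ℝ (Fin N) → ℝ) (hu : IsClassicalSolution f u u₀)
    (θ' θ : ℝ) (h1 : θ₀ < θ') (h2 : θ' < θ) (h3 : θ < Z) :
    ∃ C : ℝ, ∃ᶠ t in atTop, centeredRadius u θ' t - centeredRadius u θ t ≤ C := by
  obtain ⟨τ, hτ, ρ, hrise⟩ :=
    hfg.exists_rise_on_cylinder hu h1 (b := (θ + Z) / 2) (by linarith) (by linarith)
  obtain ⟨-, -, hθ₀, -⟩ := hfg
  obtain ⟨L, hfL⟩ := hf.exists_le_mul
  obtain ⟨c₀, hradii⟩ :=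
    hu.exists_centeredRadii_le hN hfL hu₀cont hu₀supp (hθ₀.trans (h1.trans h2))
  by_contra! hfar
  obtain ⟨T₀, hT₀⟩ := eventually_atTop.1 (hfar ((L + 1) * τ + 1 + 1 + ρ))
  obtain ⟨w, hw, hwin⟩ := exists_window_without_drop (T₁ := max T₀ 1) hτ.le
    (fun t ht => centeredRadius_nonneg ⟨_, hradii t (by linarith [le_max_right T₀ 1])⟩)
    (fun t ht => centeredRadius_le (hradii t (by linarith [le_max_right T₀ 1])))
  obtain ⟨x₀, hx₀, hx₀θ⟩ :=
    exists_le_of_centeredRadius_lt ⟨_, hradii w (by linarith [le_max_right T₀ 1])⟩ (lt_add_one _)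
  have hgt : ∀ t ∈ Icc (w - τ) (w - τ + τ), ∀ x ∈ closedBall x₀ ρ, θ' < u t x := by
    intro t ht x hx
    rw [sub_add_cancel] at ht
    refine lt_of_norm_lt_centeredRadius ?_
    have := hT₀ t (by linarith [ht.1, le_max_left T₀ 1])
    have := hwin t ht
    have := norm_le_norm_add_norm_sub' x x₀
    have := mem_closedBall_iff_norm.1 hx
    linarith
  have := hrise (w - τ) (by linarith [le_max_right T₀ 1]) x₀ hgt
  rw [sub_add_cancel] at this
  linarith

/-- Under hypothesis (f≥g), for an invading solution with compactly
supported initial datum and levels `θ₀ < θ' < θ < Z`, the centered inscribed radii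
satisfy `liminf_{t→∞} (r_{θ'}(t) − r_θ(t)) < +∞`, i.e. the difference is frequently
bounded by some constant `C`. -/
theorem liminf_centeredRadius_sub_lt_top
    {N : ℕ} (hN : 0 < N) (f : ℝ → ℝ → ℝ) (hf : StandingAssumptions f)
    (g : ℝ → ℝ) (θ₀ Z : ℝ) (hfg : HypFG f g θ₀ Z)
    (u₀ : EuclideanSpace ℝ (Fin N) → ℝ)
    (hu₀nn : ∀ x, 0 ≤ u₀ x) (hu₀cont : Continuous u₀)
    (hu₀supp : HasCompactSupport u₀) (hu₀ne : u₀ ≠ 0)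
    (u : ℝ → EuclideanSpace ℝ (Fin N) → ℝ) (hu : IsClassicalSolution f u u₀)
    (hinv : Invades u (ENNReal.ofReal Z))
    (θ' θ : ℝ) (h1 : θ₀ < θ') (h2 : θ' < θ) (h3 : θ < Z) :
    ∃ C : ℝ, ∃ᶠ t in atTop, centeredRadius u θ' t - centeredRadius u θ t ≤ C :=
  liminf_centeredRadius_sub_lt_top_general hN f hf g θ₀ Z hfg u₀ hu₀cont hu₀supp u hu θ' θ h1 h2 h3
end

section
/- Assume f(t,z) ≥ g(z) for all t,z ≥ 0, where g : [0,∞) → ℝ is continuous. Let v be a nonnegative classical solution of ∂_s v = Δv + g(v) on (0,∞)×ℝ^N whose initial datum v₀ is continuous, satisfies 0 ≤ v₀ ≤ θ', and is supported in the closed ball of radius R centered at the origin; suppose v(T,0) > θ for some T > 0 and some θ > θ' > 0. Let u be a nonnegative classical solution of ∂_t u = Δu + f(t,u) on (0,∞)×ℝ^N. Then for every t > 0 and every ξ ∈ ℝ^N with |ξ| < r_{θ'}(t) − R one has u(t+T, ξ) > θ; in particular r_θ(t+T) ≥ r_{θ'}(t) − R, where r_θ denotes the centered inscribed radius of u at level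 θ. -/
open Filter Metric Set
open scoped ENNReal NNReal

/-- The centered inscribed radius `r_θ(t)` valued in `ℝ≥0∞`: the supremum of radii `r`
such that `u(t,·) > θ` on the centered ball `B_r(0)` (equal to `0` if no such `r`
exists). -/
noncomputable def centeredRadiusE {N : ℕ} (u : ℝ → EuclideanSpace ℝ (Fin N) → ℝ)
    (θ t : ℝ) : ℝ≥0∞ :=
  ⨆ (r : ℝ≥0) (_ : ∀ x : EuclideanSpace ℝ (Fin N), ‖x‖ < (r : ℝ) → θ < u t x),
    (r : ℝ≥0∞)

/-!
Everything rests on the comparison principle. If `‖ξ‖ + R < r_{θ'}(t)`, then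
`v₀(· - ξ) ≤ θ' < u(t, ·)` on the support of `v₀(· - ξ)` and `u(t, ·) ≥ 0` elsewhere, so
`v₀(· - ξ) ≤ u(t, ·)`. Because `f ≥ g` on nonnegative values, `v(s, · - ξ)` is a subsolution of
the equation solved by `u(t + s, ·)`, and comparison gives `u(t + T, ξ) ≥ v(T, 0) > θ`. Hence the
centered ball of radius `r_{θ'}(t) - R` lies in `U_θ(t + T)`.

The comparison principle is the minimum principle applied to `u - v + ε e^{Ks} (1 + ‖x‖²)`
on the whole space, followed by `ε → 0`.
-/

open Real Topology
open scoped Laplacian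

theorem IsLocalMin.nonneg_of_hasDerivAt_of_hasDerivAt {φ φ' : ℝ → ℝ} {a d : ℝ}
    (hmin : IsLocalMin φ a) (hφ : ∀ τ, HasDerivAt φ (φ' τ) τ) (hφ' : HasDerivAt φ' d a) :
    0 ≤ d := by
  by_contra! hd
  have hcrit : φ' a = 0 := hmin.hasDerivAt_eq_zero (hφ a)
  have hneg : ∀ᶠ τ in 𝓝[>] a, φ' τ < 0 := by
    have hslope := (hasDerivAt_iff_tendsto_slope.mp hφ').mono_left
      (nhdsWithin_mono _ fun τ (hτ : a < τ) => hτ.ne')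
    filter_upwards [hslope.eventually_lt_const hd, self_mem_nhdsWithin] with τ hτ (haτ : a < τ)
    rw [slope_def_field, hcrit, sub_zero] at hτ
    exact neg_of_div_neg_left hτ (sub_pos.mpr haτ).le
  obtain ⟨b, hab, hb⟩ := (nhdsGT_basis a).eventually_iff.mp
    (hneg.and (hmin.filter_mono nhdsWithin_le_nhds))
  obtain ⟨τ, haτ, hτb⟩ := exists_between hab
  obtain ⟨c, hc, hslope⟩ := exists_hasDerivAt_eq_slope φ φ' haτ
    (fun x _ => (hφ x).continuousAt.continuousWithinAt) (fun x _ => hφ x)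
  have : 0 ≤ φ' c := hslope ▸ div_nonneg (sub_nonneg.mpr (hb ⟨haτ, hτb⟩).2) (sub_pos.mpr haτ).le
  exact this.not_gt (hb ⟨hc.1, hc.2.trans hτb⟩).1

theorem IsLocalMin.iteratedFDeriv_two_nonneg {E : Type*} [NormedAddCommGroup E]
    [NormedSpace ℝ E] {f : E → ℝ} {x : E} (hmin : IsLocalMin f x) (hf : ContDiff ℝ 2 f)
    (v : E) : 0 ≤ iteratedFDeriv ℝ 2 f x ![v, v] := by
  have hline : ∀ τ : ℝ, HasDerivAt (fun τ : ℝ => x + τ • v) v τ := fun τ => by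
    simpa using ((hasDerivAt_id τ).smul_const v).const_add x
  have hf' : Differentiable ℝ (fderiv ℝ f) :=
    (hf.fderiv_right (m := 1) (by norm_num)).differentiable one_ne_zero
  have hd2 : HasDerivAt (fun τ : ℝ => fderiv ℝ f (x + τ • v) v)
      (fderiv ℝ (fderiv ℝ f) x v v) 0 := by
    simpa using ((hf' _).hasFDerivAt.comp_hasDerivAt (0 : ℝ) (hline 0)).clm_apply
      (hasDerivAt_const (0 : ℝ) v)
  rw [iteratedFDeriv_two_apply]
  refine IsLocalMin.nonneg_of_hasDerivAt_of_hasDerivAt ?_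
    (fun τ => ((hf.differentiable two_ne_zero _).hasFDerivAt.comp_hasDerivAt τ (hline τ))) hd2
  have hmin' : IsLocalMin f (x + (0 : ℝ) • v) := by simpa using hmin
  exact hmin'.comp_continuous (g := fun τ : ℝ => x + τ • v) (by fun_prop)

theorem IsLocalMin.laplacian_nonneg {E : Type*} [NormedAddCommGroup E] [InnerProductSpace ℝ E]
    [FiniteDimensional ℝ E] {f : E → ℝ} {x : E} (hmin : IsLocalMin f x) (hf : ContDiff ℝ 2 f) :
    0 ≤ Δ f x := by
  rw [InnerProductSpace.laplacian_eq_iteratedFDeriv_stdOrthonormalBasis]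
  exact Finset.sum_nonneg fun i _ => hmin.iteratedFDeriv_two_nonneg hf _

theorem HasDerivAt.nonpos_of_isLocalMinOn_Iic {φ : ℝ → ℝ} {a d : ℝ} (hφ : HasDerivAt φ d a)
    (hmin : IsLocalMinOn φ (Iic a) a) : d ≤ 0 := by
  have hleft : (-1 : ℝ) ∈ posTangentConeAt (Iic a) a :=
    mem_posTangentConeAt_of_segment_subset (by
      rw [segment_symm, segment_eq_Icc (by linarith)]; exact Icc_subset_Iic_self)
  simpa using hmin.hasFDerivWithinAt_nonneg hφ.hasFDerivAt.hasFDerivWithinAt hleft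

theorem laplacian_eq_laplacian_s8 {N : ℕ} {φ : EuclideanSpace ℝ (Fin N) → ℝ}
    (hφ : ContDiff ℝ 2 φ) : laplacian φ = Δ φ := by
  have hφ' : Differentiable ℝ (fderiv ℝ φ) :=
    (hφ.fderiv_right (m := 1) (by norm_num)).differentiable one_ne_zero
  ext x
  rw [InnerProductSpace.laplacian_eq_iteratedFDeriv_orthonormalBasis φ
    (EuclideanSpace.basisFun (Fin N) ℝ), laplacian]
  refine Finset.sum_congr rfl fun i _ => ?_
  rw [iteratedFDeriv_two_apply, fderiv_clm_apply (hφ' x) (differentiableAt_const _)]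
  simp

theorem laplacian_comp_sub_const {E : Type*} [NormedAddCommGroup E] [InnerProductSpace ℝ E]
    [FiniteDimensional ℝ E] (f : E → ℝ) (a x : E) :
    Δ (fun y => f (y - a)) x = Δ f (x - a) := by
  simp only [InnerProductSpace.laplacian_eq_iteratedFDeriv_stdOrthonormalBasis,
    iteratedFDeriv_comp_sub]

theorem laplacian_one_add_norm_sq {E : Type*} [NormedAddCommGroup E] [InnerProductSpace ℝ E]
    [FiniteDimensional ℝ E] (x : E) :
    Δ (fun y : E => (1 + ‖y‖ ^ 2 : ℝ)) x = (2 * Module.finrank ℝ E : ℝ) := by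
  set B : E →L[ℝ] E →L[ℝ] ℝ := (2 : ℕ) • innerSL ℝ
  have hD : fderiv ℝ (fun y : E => (1 + ‖y‖ ^ 2 : ℝ)) = B := by
    ext1 y
    rw [fderiv_const_add, fderiv_norm_sq_apply]
    rfl
  have hB : ∀ v : E, ‖v‖ = 1 → B v v = 2 := fun v hv => by
    change 2 • inner ℝ v v = (2 : ℝ)
    simp [hv]
  rw [InnerProductSpace.laplacian_eq_iteratedFDeriv_stdOrthonormalBasis]
  simp [iteratedFDeriv_two_apply, hD, B.fderiv, hB, mul_comm]

structure IsParabolicRegular {E : Type*} [NormedAddCommGroup E] [NormedSpace ℝ E] (T : ℝ)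
    (u : ℝ → E → ℝ) : Prop where
  cont : ContinuousOn (Function.uncurry u) (Icc 0 T ×ˢ univ)
  time_diff : ∀ s ∈ Ioc 0 T, ∀ x, DifferentiableAt ℝ (u · x) s
  space_smooth : ∀ s ∈ Ioc 0 T, ContDiff ℝ 2 (u s)

theorem exists_first_nonpos_time {E : Type*} [NormedAddCommGroup E] [ProperSpace E]
    {W : ℝ → E → ℝ} {T ρ : ℝ}
    (hW : ContinuousOn (Function.uncurry W) (Icc 0 T ×ˢ univ))
    (hfar : ∀ s ∈ Icc 0 T, ∀ x, W s x ≤ 0 → ‖x‖ ≤ ρ)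
    (hnonpos : ∃ s ∈ Icc 0 T, ∃ x, W s x ≤ 0) :
    ∃ s₀ ∈ Icc 0 T, (∃ x, W s₀ x ≤ 0) ∧ ∀ s ∈ Ico 0 s₀, ∀ x, 0 < W s x := by
  set A := (Icc 0 T ×ˢ closedBall (0 : E) ρ) ∩ Function.uncurry W ⁻¹' Iic 0
  have hA : IsCompact A :=
    (isCompact_Icc.prod (isCompact_closedBall _ _)).of_isClosed_subset
      ((hW.mono (prod_mono subset_rfl (subset_univ _))).preimage_isClosed_of_isClosed
        (isClosed_Icc.prod isClosed_closedBall) isClosed_Iic) inter_subset_left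
  have hmemA : ∀ s ∈ Icc 0 T, ∀ x, W s x ≤ 0 → (s, x) ∈ A := fun s hs x hsx =>
    ⟨⟨hs, mem_closedBall_zero_iff.mpr (hfar s hs x hsx)⟩, hsx⟩
  obtain ⟨s₁, hs₁, x₁, hx₁⟩ := hnonpos
  obtain ⟨⟨s₀, x₀⟩, ⟨⟨hs₀, -⟩, hx₀⟩, hmin⟩ :=
    hA.exists_isMinOn ⟨_, hmemA s₁ hs₁ x₁ hx₁⟩ continuous_fst.continuousOn
  refine ⟨s₀, hs₀, ⟨x₀, hx₀⟩, fun s hs x => lt_of_not_ge fun hsx => ?_⟩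
  exact hs.2.not_ge (hmin (hmemA s ⟨hs.1, hs.2.le.trans hs₀.2⟩ x hsx))

theorem pos_of_strict_supersolution {E : Type*} [NormedAddCommGroup E] [InnerProductSpace ℝ E]
    [FiniteDimensional ℝ E] {W : ℝ → E → ℝ} {T ρ : ℝ} (hW : IsParabolicRegular T W)
    (hfar : ∀ s ∈ Icc 0 T, ∀ x, W s x ≤ 0 → ‖x‖ ≤ ρ)
    (hinit : ∀ x, 0 < W 0 x)
    (hsuper : ∀ s ∈ Ioc 0 T, ∀ x, W s x = 0 → Δ (W s) x < deriv (W · x) s) :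
    ∀ s ∈ Icc 0 T, ∀ x, 0 < W s x := by
  by_contra! hnonpos
  obtain ⟨s₀, hs₀, ⟨x₁, hx₁⟩, hbefore⟩ := exists_first_nonpos_time hW.cont hfar hnonpos
  have hs₀pos : 0 < s₀ := hs₀.1.lt_of_ne (by rintro rfl; exact (hinit x₁).not_ge hx₁)
  have hball : ∀ x, W s₀ x ≤ 0 → x ∈ closedBall (0 : E) ρ := fun x hx =>
    mem_closedBall_zero_iff.mpr (hfar s₀ hs₀ x hx)
  have hslice : Continuous (W s₀) :=
    hW.cont.comp_continuous (continuous_const.prodMk continuous_id) fun _ => ⟨hs₀, trivial⟩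
  obtain ⟨x₀, -, hx₀min⟩ := (isCompact_closedBall (0 : E) ρ).exists_isMinOn ⟨x₁, hball x₁ hx₁⟩
    hslice.continuousOn
  have hx₀ : W s₀ x₀ ≤ 0 := (hx₀min (hball x₁ hx₁)).trans hx₁
  have hspace : IsMinOn (W s₀) univ x₀ := fun x _ =>
    if hx : W s₀ x ≤ 0 then hx₀min (hball x hx) else hx₀.trans (not_le.mp hx).le
  have hzero : W s₀ x₀ = 0 := by
    have hcont : ContinuousWithinAt (W · x₀) (Ico 0 s₀) s₀ :=
      ((hW.cont.comp (continuous_id.prodMk continuous_const).continuousOn fun s hs => ⟨hs, trivial⟩)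
        s₀ hs₀).mono fun s hs => ⟨hs.1, hs.2.le.trans hs₀.2⟩
    have := right_nhdsWithin_Ico_neBot hs₀pos
    refine le_antisymm hx₀ (ge_of_tendsto hcont ?_)
    filter_upwards [self_mem_nhdsWithin] with s hs using (hbefore s hs x₀).le
  have htime : IsLocalMinOn (W · x₀) (Iic s₀) s₀ := by
    filter_upwards [Ioc_mem_nhdsLE hs₀pos] with s hs
    rcases hs.2.eq_or_lt with rfl | hlt
    · exact le_rfl
    · exact hzero ▸ (hbefore s ⟨hs.1.le, hlt⟩ x₀).le
  have hs₀' : s₀ ∈ Ioc 0 T := ⟨hs₀pos, hs₀.2⟩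
  exact (hsuper s₀ hs₀' x₀ hzero).not_ge <|
    ((hW.time_diff s₀ hs₀' x₀).hasDerivAt.nonpos_of_isLocalMinOn_Iic htime).trans
      ((hspace.isLocalMin univ_mem).laplacian_nonneg (hW.space_smooth s₀ hs₀'))

namespace IsParabolicRegular

variable {E : Type*} [NormedAddCommGroup E] [InnerProductSpace ℝ E] {T : ℝ} {u v : ℝ → E → ℝ}

theorem sub_add_penalty (hu : IsParabolicRegular T u) (hv : IsParabolicRegular T v) (ε K : ℝ) :
    IsParabolicRegular T fun s x => u s x - v s x + ε * exp (K * s) * (1 + ‖x‖ ^ 2) where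
  cont := (hu.cont.sub hv.cont).add
    (by fun_prop : Continuous fun p : ℝ × E => ε * exp (K * p.1) * (1 + ‖p.2‖ ^ 2)).continuousOn
  time_diff s hs x := ((hu.time_diff s hs x).sub (hv.time_diff s hs x)).add (by fun_prop)
  space_smooth s hs := ((hu.space_smooth s hs).sub (hv.space_smooth s hs)).add
    (contDiff_const.mul (contDiff_const.add (contDiff_norm_sq ℝ)))

theorem deriv_sub_add_penalty (hu : IsParabolicRegular T u) (hv : IsParabolicRegular T v)
    {s : ℝ} (hs : s ∈ Ioc 0 T) (x : E) (ε K : ℝ) :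
    deriv (fun s => u s x - v s x + ε * exp (K * s) * (1 + ‖x‖ ^ 2)) s
      = deriv (u · x) s - deriv (v · x) s + ε * exp (K * s) * K * (1 + ‖x‖ ^ 2) := by
  refine (((hu.time_diff s hs x).hasDerivAt.sub (hv.time_diff s hs x).hasDerivAt).add
    ((((hasDerivAt_id s).const_mul K).exp.const_mul ε).mul_const _)).deriv.trans ?_
  simp only [id, mul_one]
  ring

variable [FiniteDimensional ℝ E]

theorem laplacian_sub_add_penalty (hu : IsParabolicRegular T u) (hv : IsParabolicRegular T v)
    {s : ℝ} (hs : s ∈ Ioc 0 T) (x : E) (c : ℝ) :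
    Δ (fun y : E => (u s y - v s y + c * (1 + ‖y‖ ^ 2) : ℝ)) x
      = (Δ (u s) x - Δ (v s) x + c * (2 * Module.finrank ℝ E) : ℝ) := by
  have hu₂ := (hu.space_smooth s hs).contDiffAt (x := x)
  have hv₂ := (hv.space_smooth s hs).contDiffAt (x := x)
  have hq₂ : ContDiffAt ℝ 2 (fun y : E => (1 + ‖y‖ ^ 2 : ℝ)) x :=
    (contDiff_const.add (contDiff_norm_sq ℝ)).contDiffAt
  change (Δ (u s - v s + c • fun y : E => (1 + ‖y‖ ^ 2 : ℝ)) : E → ℝ) x = _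
  rw [ContDiffAt.laplacian_add (f₁ := u s - v s) (f₂ := c • fun y : E => (1 + ‖y‖ ^ 2 : ℝ))
      (hu₂.sub hv₂) (hq₂.const_smul c), hu₂.laplacian_sub hv₂,
    InnerProductSpace.laplacian_smul c hq₂, laplacian_one_add_norm_sq, smul_eq_mul]

theorem sub_lt_penalty {F : ℝ → ℝ → ℝ} {L : ℝ≥0} {M ε : ℝ}
    (hu : IsParabolicRegular T u) (hv : IsParabolicRegular T v)
    (hF : ∀ s ∈ Ioc 0 T, LipschitzWith L (F s))
    (hM : ∀ s ∈ Icc 0 T, ∀ x, v s x - u s x ≤ M)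
    (hsuper : ∀ s ∈ Ioc 0 T, ∀ x, Δ (u s) x + F s (u s x) ≤ deriv (u · x) s)
    (hsub : ∀ s ∈ Ioc 0 T, ∀ x, deriv (v · x) s ≤ Δ (v s) x + F s (v s x))
    (hinit : ∀ x, v 0 x ≤ u 0 x) (hε : 0 < ε) (s : ℝ) (hs : s ∈ Icc 0 T) (x : E) :
    v s x - u s x < ε * exp ((L + 2 * Module.finrank ℝ E + 1) * s) * (1 + ‖x‖ ^ 2) := by
  set n : ℝ := (Module.finrank ℝ E : ℝ)
  set K : ℝ := L + 2 * n + 1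
  set W : ℝ → E → ℝ := fun s x => u s x - v s x + ε * exp (K * s) * (1 + ‖x‖ ^ 2)
  suffices 0 < W s x by linarith
  -- the penalty confines contact points to a ball; `K > L + 2 dim E` makes `W` a strict
  -- supersolution there
  refine pos_of_strict_supersolution (ρ := √(M / ε)) (hu.sub_add_penalty hv ε K) ?_ ?_ ?_ s hs x
  · intro s hs x hx
    have hexp : ε * (1 + ‖x‖ ^ 2) ≤ ε * exp (K * s) * (1 + ‖x‖ ^ 2) := by
      gcongr
      exact le_mul_of_one_le_right hε.le (one_le_exp (mul_nonneg (by positivity) hs.1))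
    refine le_sqrt_of_sq_le ((le_div_iff₀ hε).mpr ?_)
    linarith [hM s hs x]
  · intro x
    simp only [mul_zero, exp_zero, mul_one]
    linarith [hinit x, mul_pos hε (by positivity : (0 : ℝ) < 1 + ‖x‖ ^ 2)]
  · intro s hs x hx
    set c := ε * exp (K * s)
    set q := 1 + ‖x‖ ^ 2
    have hcq : 0 < c * q := by positivity
    have hvu : v s x - u s x = c * q := by linarith [show W s x = u s x - v s x + c * q from rfl]
    have hLip : F s (v s x) - F s (u s x) ≤ L * (c * q) := by
      have := (hF s hs).dist_le_mul (v s x) (u s x)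
      rw [Real.dist_eq, Real.dist_eq, hvu, abs_of_pos hcq] at this
      exact (le_abs_self _).trans this
    have hn : 2 * n * c ≤ 2 * n * (c * q) := by
      gcongr
      exact le_mul_of_one_le_right (by positivity) (le_add_of_nonneg_right (by positivity))
    have hK : c * K * q = L * (c * q) + 2 * n * (c * q) + c * q := by ring
    rw [hu.laplacian_sub_add_penalty hv hs x c, hu.deriv_sub_add_penalty hv hs x ε K]
    linarith [hsuper s hs x, hsub s hs x]

theorem le_of_subsolution_of_supersolution {F : ℝ → ℝ → ℝ} {L : ℝ≥0}
    (hu : IsParabolicRegular T u) (hv : IsParabolicRegular T v)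
    (hF : ∀ s ∈ Ioc 0 T, LipschitzWith L (F s))
    (hbdd : ∃ M, ∀ s ∈ Icc 0 T, ∀ x, v s x - u s x ≤ M)
    (hsuper : ∀ s ∈ Ioc 0 T, ∀ x, Δ (u s) x + F s (u s x) ≤ deriv (u · x) s)
    (hsub : ∀ s ∈ Ioc 0 T, ∀ x, deriv (v · x) s ≤ Δ (v s) x + F s (v s x))
    (hinit : ∀ x, v 0 x ≤ u 0 x) (s : ℝ) (hs : s ∈ Icc 0 T) (x : E) :
    v s x ≤ u s x := by
  obtain ⟨M, hM⟩ := hbdd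
  set C := exp ((L + 2 * Module.finrank ℝ E + 1) * s) * (1 + ‖x‖ ^ 2)
  have hlim : Tendsto (fun ε : ℝ => ε * C) (𝓝[>] 0) (𝓝 0) := by
    simpa using ((continuous_mul_const C).tendsto 0).mono_left nhdsWithin_le_nhds
  refine sub_nonpos.mp <| ge_of_tendsto hlim <| eventually_nhdsWithin_of_forall fun ε hε => ?_
  simpa only [C, mul_assoc] using (hu.sub_lt_penalty hv hF hM hsuper hsub hinit hε s hs x).le

end IsParabolicRegular

namespace IsClassicalSolution

variable {N : ℕ} {f : ℝ → ℝ → ℝ} {u : ℝ → EuclideanSpace ℝ (Fin N) → ℝ}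
  {u₀ : EuclideanSpace ℝ (Fin N) → ℝ}

theorem isParabolicRegular_comp_const_add (hu : IsClassicalSolution f u u₀) {t : ℝ} (ht : 0 ≤ t)
    (T : ℝ) : IsParabolicRegular T fun s x => u (t + s) x where
  cont := hu.cont.comp ((continuous_const.add continuous_fst).prodMk continuous_snd).continuousOn
    fun p hp => ⟨show 0 ≤ t + p.1 by linarith [hp.1.1], trivial⟩
  time_diff s hs x := (hu.time_diff x (t + s) (by linarith [hs.1])).comp s
    (differentiableAt_id.const_add t)
  space_smooth s hs := hu.space_smooth (t + s) (by linarith [hs.1])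

theorem isParabolicRegular_comp_sub_const (hu : IsClassicalSolution f u u₀)
    (ξ : EuclideanSpace ℝ (Fin N)) (T : ℝ) : IsParabolicRegular T fun s x => u s (x - ξ) where
  cont := hu.cont.comp (continuous_fst.prodMk (continuous_snd.sub continuous_const)).continuousOn
    fun _ hp => ⟨hp.1.1, trivial⟩
  time_diff s hs x := hu.time_diff (x - ξ) s hs.1
  space_smooth s hs := (hu.space_smooth s hs.1).comp (contDiff_id.sub contDiff_const)

theorem comp_sub_le_of_le {g : ℝ → ℝ} {L : ℝ≥0} {v : ℝ → EuclideanSpace ℝ (Fin N) → ℝ}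
    {v₀ : EuclideanSpace ℝ (Fin N) → ℝ}
    (hu : IsClassicalSolution f u u₀) (hv : IsClassicalSolution (fun _ z => g z) v v₀)
    (hL : ∀ t > 0, LipschitzWith L (f t)) (hfg : ∀ t ≥ 0, ∀ z ≥ 0, g z ≤ f t z)
    (hvnn : ∀ s ≥ 0, ∀ x, 0 ≤ v s x) {t T : ℝ} (ht : 0 ≤ t) (hT : 0 < T)
    (ξ : EuclideanSpace ℝ (Fin N)) (hinit : ∀ x, v₀ (x - ξ) ≤ u t x) :
    ∀ s ∈ Icc 0 T, ∀ x, v s (x - ξ) ≤ u (t + s) x := by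
  obtain ⟨Cu, hCu⟩ := hu.bounded (t + T) (by linarith)
  obtain ⟨Cv, hCv⟩ := hv.bounded T hT
  refine (hu.isParabolicRegular_comp_const_add ht T).le_of_subsolution_of_supersolution
    (hv.isParabolicRegular_comp_sub_const ξ T) (F := fun s => f (t + s))
    (fun s hs => hL _ (by linarith [hs.1])) ⟨Cv + Cu, fun s hs x => ?_⟩ ?_ ?_ ?_
  · have hu' := hCu (t + s) ⟨by linarith [hs.1], by linarith [hs.2]⟩ x
    have hv' := hCv s hs (x - ξ)
    linarith [le_abs_self (v s (x - ξ)), neg_abs_le (u (t + s) x)]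
  · intro s hs x
    have hts : 0 < t + s := by linarith [hs.1]
    rw [deriv_comp_const_add (fun r => u r x), hu.eqn _ hts,
      laplacian_eq_laplacian_s8 (hu.space_smooth _ hts)]
  · intro s hs x
    rw [hv.eqn s hs.1, laplacian_comp_sub_const, laplacian_eq_laplacian_s8 (hv.space_smooth s hs.1)]
    exact (add_le_add_iff_left _).mpr (hfg (t + s) (by linarith [hs.1]) _ (hvnn s hs.1.le _))
  · intro x
    rw [hv.init, add_zero]
    exact hinit x

end IsClassicalSolution

theorem comp_sub_le_of_tsupport_subset {E : Type*} [NormedAddCommGroup E] {v₀ w : E → ℝ}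
    {R r θ : ℝ} {ξ : E} (hsupp : tsupport v₀ ⊆ closedBall 0 R) (hle : ∀ x, v₀ x ≤ θ)
    (hw : ∀ x, ‖x‖ < r → θ < w x) (hnn : ∀ x, 0 ≤ w x) (hξ : ‖ξ‖ + R < r) (x : E) :
    v₀ (x - ξ) ≤ w x := by
  by_cases hx : x - ξ ∈ tsupport v₀
  · have hxξ : ‖x - ξ‖ ≤ R := mem_closedBall_zero_iff.mp (hsupp hx)
    exact (hle _).trans (hw x (by linarith [norm_le_norm_add_norm_sub' x ξ])).le
  · rw [image_eq_zero_of_notMem_tsupport hx]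
    exact hnn x

section CenteredRadius

variable {N : ℕ} {u : ℝ → EuclideanSpace ℝ (Fin N) → ℝ} {θ t : ℝ}

theorem exists_lt_of_ofReal_lt_centeredRadiusE {a : ℝ}
    (h : ENNReal.ofReal a < centeredRadiusE u θ t) :
    ∃ r : ℝ, a < r ∧ ∀ x, ‖x‖ < r → θ < u t x := by
  obtain ⟨r, hr⟩ := lt_iSup_iff.mp h
  obtain ⟨hball, hlt⟩ := lt_iSup_iff.mp hr
  rw [← ENNReal.ofReal_coe_nnreal] at hlt
  exact ⟨r, (ENNReal.ofReal_lt_ofReal_iff'.mp hlt).1, hball⟩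

theorem ofReal_le_centeredRadiusE {r : ℝ} (h : ∀ x, ‖x‖ < r → θ < u t x) :
    ENNReal.ofReal r ≤ centeredRadiusE u θ t := by
  refine le_iSup₂ (f := fun (ρ : ℝ≥0) (_ : ∀ x : EuclideanSpace ℝ (Fin N), ‖x‖ < ρ → θ < u t x) =>
    (ρ : ℝ≥0∞)) r.toNNReal fun x hx => h x ?_
  rw [Real.coe_toNNReal'] at hx
  exact (lt_max_iff.mp hx).resolve_right (norm_nonneg x).not_gt

theorem centeredRadiusE_sub_le {θ' t' R : ℝ}
    (h : ∀ ξ, ENNReal.ofReal (‖ξ‖ + R) < centeredRadiusE u θ' t → θ < u t' ξ) :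
    centeredRadiusE u θ' t - ENNReal.ofReal R ≤ centeredRadiusE u θ t' := by
  rw [tsub_le_iff_right]
  refine iSup₂_le fun r hr => ?_
  rw [← ENNReal.ofReal_coe_nnreal]
  by_cases hrR : ENNReal.ofReal r ≤ ENNReal.ofReal R
  · exact le_add_left hrR
  obtain ⟨-, hr0⟩ := ENNReal.ofReal_lt_ofReal_iff'.mp (not_le.mp hrR)
  have hball : ∀ x, ‖x‖ < r - R → θ < u t' x := fun x hx =>
    h x (((ENNReal.ofReal_lt_ofReal_iff hr0).mpr (by linarith)).trans_le
      (ofReal_le_centeredRadiusE hr))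
  calc ENNReal.ofReal r = ENNReal.ofReal (r - R + R) := by rw [sub_add_cancel]
    _ ≤ ENNReal.ofReal (r - R) + ENNReal.ofReal R := ENNReal.ofReal_add_le
    _ ≤ centeredRadiusE u θ t' + ENNReal.ofReal R := by
      gcongr
      exact ofReal_le_centeredRadiusE hball

end CenteredRadius

theorem level_set_propagation_lower_bound_general
    {N : ℕ} (f : ℝ → ℝ → ℝ) (hf : StandingAssumptions f)
    (g : ℝ → ℝ)
    (hfg : ∀ t ≥ (0:ℝ), ∀ z ≥ (0:ℝ), g z ≤ f t z)
    (θ θ' R T : ℝ) (hT : 0 < T)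
    (v₀ : EuclideanSpace ℝ (Fin N) → ℝ)
    (hv₀le : ∀ x, v₀ x ≤ θ')
    (hv₀supp : tsupport v₀ ⊆ Metric.closedBall 0 R)
    (v : ℝ → EuclideanSpace ℝ (Fin N) → ℝ)
    (hv : IsClassicalSolution (fun _ z => g z) v v₀)
    (hvnn : ∀ s ≥ (0:ℝ), ∀ x, 0 ≤ v s x)
    (hvT : θ < v T 0)
    (u₀ : EuclideanSpace ℝ (Fin N) → ℝ)
    (u : ℝ → EuclideanSpace ℝ (Fin N) → ℝ) (hu : IsClassicalSolution f u u₀)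
    (hunn : ∀ t ≥ (0:ℝ), ∀ x, 0 ≤ u t x) :
    ∀ t > (0:ℝ),
      (∀ ξ : EuclideanSpace ℝ (Fin N),
        ENNReal.ofReal (‖ξ‖ + R) < centeredRadiusE u θ' t → θ < u (t + T) ξ) ∧
      centeredRadiusE u θ' t - ENNReal.ofReal R ≤ centeredRadiusE u θ (t + T) := by
  intro t ht
  obtain ⟨L, hL⟩ := hf.2.1
  have hpropagate : ∀ ξ : EuclideanSpace ℝ (Fin N),
      ENNReal.ofReal (‖ξ‖ + R) < centeredRadiusE u θ' t → θ < u (t + T) ξ := by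
    intro ξ hξ
    obtain ⟨r, hξr, hball⟩ := exists_lt_of_ofReal_lt_centeredRadiusE hξ
    have hinit := comp_sub_le_of_tsupport_subset hv₀supp hv₀le hball (hunn t ht.le) hξr
    have hcomp := hu.comp_sub_le_of_le hv hL hfg hvnn ht.le hT ξ hinit T ⟨hT.le, le_rfl⟩ ξ
    rw [sub_self] at hcomp
    exact hvT.trans_le hcomp
  exact ⟨hpropagate, centeredRadiusE_sub_le hpropagate⟩

/-- If `f ≥ g`, `v` solves `∂ₛv = Δv + g(v)` with `0 ≤ v₀ ≤ θ'` supported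
in the closed ball of radius `R` and `v(T,0) > θ`, and `u ≥ 0` solves
`∂ₜu = Δu + f(t,u)`, then `u(t+T,ξ) > θ` whenever `|ξ| < r_{θ'}(t) − R` (expressed as
`|ξ| + R < r_{θ'}(t)` in `ℝ≥0∞`); in particular `r_θ(t+T) ≥ r_{θ'}(t) − R`. -/
theorem level_set_propagation_lower_bound
    {N : ℕ} (hN : 0 < N) (f : ℝ → ℝ → ℝ) (hf : StandingAssumptions f)
    (g : ℝ → ℝ) (hgcont : ContinuousOn g (Set.Ici 0))
    (hfg : ∀ t ≥ (0:ℝ), ∀ z ≥ (0:ℝ), g z ≤ f t z)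
    (θ θ' R T : ℝ) (hθ' : 0 < θ') (hθ : θ' < θ) (hR : 0 < R) (hT : 0 < T)
    (v₀ : EuclideanSpace ℝ (Fin N) → ℝ) (hv₀cont : Continuous v₀)
    (hv₀nn : ∀ x, 0 ≤ v₀ x) (hv₀le : ∀ x, v₀ x ≤ θ')
    (hv₀supp : tsupport v₀ ⊆ Metric.closedBall 0 R)
    (v : ℝ → EuclideanSpace ℝ (Fin N) → ℝ)
    (hv : IsClassicalSolution (fun _ z => g z) v v₀)
    (hvnn : ∀ s ≥ (0:ℝ), ∀ x, 0 ≤ v s x)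
    (hvT : θ < v T 0)
    (u₀ : EuclideanSpace ℝ (Fin N) → ℝ)
    (u : ℝ → EuclideanSpace ℝ (Fin N) → ℝ) (hu : IsClassicalSolution f u u₀)
    (hunn : ∀ t ≥ (0:ℝ), ∀ x, 0 ≤ u t x) :
    ∀ t > (0:ℝ),
      (∀ ξ : EuclideanSpace ℝ (Fin N),
        ENNReal.ofReal (‖ξ‖ + R) < centeredRadiusE u θ' t → θ < u (t + T) ξ) ∧
      centeredRadiusE u θ' t - ENNReal.ofReal R ≤ centeredRadiusE u θ (t + T) :=
  level_set_propagation_lower_bound_general f hf g hfg θ θ' R T hT v₀ hv₀le hv₀supp v hv hvnn hvT u₀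
    u hu hunn
end
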